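/- arXiv:2311.07077 — 2 statements merged into one kernel-verified Lean document; each statement's English description precedes it below -/
import Mathlib

section
/- The output-enlarging embedding E_k preserves locality and no-signaling, and leaves the standard and generalized robustness unchanged: R_S(E_k(P)) = R_S(P) and R_G(E_k(P)) = R_G(P) for every no-signaling behavior P. -/
/-!
Both `E_k` and the map that deletes the added outcomes (a left inverse of the inclusion of outcome
sets) are output relabelings: each conditional distribution `p x y` is pushed forward along maps of
the outcome sets. A relabeling sends deterministic strategies to deterministic strategies, so it
preserves locality; it also preserves positivity, normalisation, no-signaling and mixtures.
Since deleting after embedding is the identity, a noise `Q` witnessing that the mixture with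
weight `r` is local for one of `P`, `E_k P` relabels to such a witness for the other, so the sets
whose infima define `R_S` and `R_G` coincide.
-/

open Finset

def IsLocal {A B : Type*} [Fintype A] [Fintype B] [DecidableEq A] [DecidableEq B]
    (p : Fin 2 → Fin 2 → A → B → ℝ) : Prop :=
  ∃ l : (Fin 2 → A) → (Fin 2 → B) → ℝ,
    (∀ f g, 0 ≤ l f g) ∧ (∑ f, ∑ g, l f g) = 1 ∧
    ∀ x y a b, p x y a b = ∑ f, ∑ g, if f x = a ∧ g y = b then l f g else 0

def NoSignaling {A B : Type*} [Fintype A] [Fintype B]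
    (p : Fin 2 → Fin 2 → A → B → ℝ) : Prop :=
  (∀ (x : Fin 2) (a : A) (y y' : Fin 2), ∑ b, p x y a b = ∑ b, p x y' a b) ∧
  (∀ (y : Fin 2) (b : B) (x x' : Fin 2), ∑ a, p x y a b = ∑ a, p x' y a b)

def IsBehavior {A B : Type*} [Fintype A] [Fintype B]
    (p : Fin 2 → Fin 2 → A → B → ℝ) : Prop :=
  (∀ x y a b, 0 ≤ p x y a b) ∧ ∀ x y, ∑ a, ∑ b, p x y a b = 1

/-- Standard robustness, defined in each scenario relative to its own local set. -/
noncomputable def RS {A B : Type*} [Fintype A] [Fintype B] [DecidableEq A] [DecidableEq B]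
    (P : Fin 2 → Fin 2 → A → B → ℝ) : ℝ :=
  sInf {r : ℝ | 0 ≤ r ∧ ∃ Q : Fin 2 → Fin 2 → A → B → ℝ, IsLocal Q ∧
    IsLocal (fun x y a b => (1 + r)⁻¹ * (P x y a b + r * Q x y a b))}

/-- Generalized robustness, defined in each scenario relative to its own local
and no-signaling sets. -/
noncomputable def RG {A B : Type*} [Fintype A] [Fintype B] [DecidableEq A] [DecidableEq B]
    (P : Fin 2 → Fin 2 → A → B → ℝ) : ℝ :=
  sInf {r : ℝ | 0 ≤ r ∧ ∃ Q : Fin 2 → Fin 2 → A → B → ℝ,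
    IsBehavior Q ∧ NoSignaling Q ∧
    IsLocal (fun x y a b => (1 + r)⁻¹ * (P x y a b + r * Q x y a b))}

/-- The output-enlarging embedding `E_k`: from outcome sizes `(mA, mB)` to
`(mA + k, mB + k)`, assigning probability 0 to added outcomes. -/
def EmbedK (mA mB k : ℕ) (p : Fin 2 → Fin 2 → Fin mA → Fin mB → ℝ) :
    Fin 2 → Fin 2 → Fin (mA + k) → Fin (mB + k) → ℝ :=
  fun x y a b =>
    if h : a.val < mA ∧ b.val < mB then p x y ⟨a.val, h.1⟩ ⟨b.val, h.2⟩ else 0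

open Function

section Pushforward

variable {A B A' B' A'' B'' : Type*} [Fintype A] [Fintype B] [DecidableEq A'] [DecidableEq B']

def pushforward₂ (α : A → A') (β : B → B') (F : A → B → ℝ) (a' : A') (b' : B') : ℝ :=
  ∑ a, ∑ b, if α a = a' ∧ β b = b' then F a b else 0

theorem sum_sum_mul_pushforward₂ [Fintype A'] [Fintype B'] (α : A → A') (β : B → B')
    (F : A → B → ℝ) (G : A' → B' → ℝ) :
    ∑ a', ∑ b', G a' b' * pushforward₂ α β F a' b' = ∑ a, ∑ b, G (α a) (β b) * F a b := by
  simp only [pushforward₂, Finset.mul_sum, mul_ite, mul_zero, ite_and]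
  rw [Finset.sum_comm]
  simp_rw [Finset.sum_comm (s := (univ : Finset B'))]
  rw [Finset.sum_comm]
  simp [Finset.sum_ite_irrel]

theorem sum_sum_pushforward₂ [Fintype A'] [Fintype B'] (α : A → A') (β : B → B')
    (F : A → B → ℝ) :
    ∑ a', ∑ b', pushforward₂ α β F a' b' = ∑ a, ∑ b, F a b := by
  simpa using sum_sum_mul_pushforward₂ α β F 1

theorem sum_pushforward₂_left [Fintype B'] (α : A → A') (β : B → B') (F : A → B → ℝ)
    (a' : A') :
    ∑ b', pushforward₂ α β F a' b' = ∑ a, if α a = a' then ∑ b, F a b else 0 := by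
  simp only [pushforward₂, ite_and]
  rw [Finset.sum_comm]
  simp only [Finset.sum_ite_irrel, Finset.sum_const_zero]
  refine Finset.sum_congr rfl fun a _ => if_congr Iff.rfl ?_ rfl
  rw [Finset.sum_comm]
  simp only [Finset.sum_ite_eq, Finset.mem_univ, if_true]

theorem sum_pushforward₂_right [Fintype A'] (α : A → A') (β : B → B') (F : A → B → ℝ)
    (b' : B') :
    ∑ a', pushforward₂ α β F a' b' = ∑ b, if β b = b' then ∑ a, F a b else 0 := by
  simp only [pushforward₂, ite_and]
  rw [Finset.sum_comm]
  simp only [Finset.sum_ite_irrel, Finset.sum_const_zero, Finset.sum_ite_eq, Finset.mem_univ,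
    if_true]
  rw [Finset.sum_comm]
  simp only [Finset.sum_ite_irrel, Finset.sum_const_zero]

theorem pushforward₂_pushforward₂ [Fintype A'] [Fintype B'] [DecidableEq A''] [DecidableEq B'']
    (α : A' → A'') (β : B' → B'') (γ : A → A') (δ : B → B') (F : A → B → ℝ) :
    pushforward₂ α β (pushforward₂ γ δ F) = pushforward₂ (α ∘ γ) (β ∘ δ) F := by
  ext a'' b''
  have h := sum_sum_mul_pushforward₂ γ δ F fun a' b' => if α a' = a'' ∧ β b' = b'' then 1 else 0
  simp only [boole_mul] at h
  exact h

theorem pushforward₂_id [DecidableEq A] [DecidableEq B] (F : A → B → ℝ) :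
    pushforward₂ id id F = F := by
  ext a b
  simp [pushforward₂, ite_and]

theorem pushforward₂_nonneg {α : A → A'} {β : B → B'} {F : A → B → ℝ} (hF : ∀ a b, 0 ≤ F a b)
    (a' : A') (b' : B') : 0 ≤ pushforward₂ α β F a' b' :=
  Finset.sum_nonneg fun a _ => Finset.sum_nonneg fun b _ => by
    split_ifs
    exacts [hF a b, le_rfl]

theorem pushforward₂_apply_of_injective [DecidableEq A] [DecidableEq B] {α : A → A'}
    {β : B → B'} (hα : Injective α) (hβ : Injective β) (F : A → B → ℝ) (a : A) (b : B) :
    pushforward₂ α β F (α a) (β b) = F a b := by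
  simp [pushforward₂, hα.eq_iff, hβ.eq_iff, ite_and]

end Pushforward

section Relabel

variable {A B A' B' : Type*} [Fintype A] [Fintype B] [DecidableEq A'] [DecidableEq B']

def relabelOutputs (α : A → A') (β : B → B') (p : Fin 2 → Fin 2 → A → B → ℝ) :
    Fin 2 → Fin 2 → A' → B' → ℝ :=
  fun x y => pushforward₂ α β (p x y)

theorem relabelOutputs_mix (α : A → A') (β : B → B') (c r : ℝ)
    (p q : Fin 2 → Fin 2 → A → B → ℝ) :
    relabelOutputs α β (fun x y a b => c * (p x y a b + r * q x y a b)) = fun x y a' b' =>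
      c * (relabelOutputs α β p x y a' b' + r * relabelOutputs α β q x y a' b') := by
  ext x y a' b'
  simp only [relabelOutputs, pushforward₂, Finset.mul_sum, ← Finset.sum_add_distrib]
  refine Finset.sum_congr rfl fun a _ => Finset.sum_congr rfl fun b _ => ?_
  split_ifs <;> ring

variable [Fintype A'] [Fintype B']

theorem IsBehavior.relabelOutputs {p : Fin 2 → Fin 2 → A → B → ℝ} (hp : IsBehavior p)
    (α : A → A') (β : B → B') : IsBehavior (relabelOutputs α β p) :=
  ⟨fun x y => pushforward₂_nonneg (hp.1 x y),
    fun x y => (sum_sum_pushforward₂ α β (p x y)).trans (hp.2 x y)⟩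

theorem NoSignaling.relabelOutputs {p : Fin 2 → Fin 2 → A → B → ℝ} (hp : NoSignaling p)
    (α : A → A') (β : B → B') : NoSignaling (relabelOutputs α β p) :=
  ⟨fun x a' y y' => by simp only [_root_.relabelOutputs, sum_pushforward₂_left, hp.1 x _ y y'],
    fun y b' x x' => by simp only [_root_.relabelOutputs, sum_pushforward₂_right, hp.2 y _ x x']⟩

theorem IsLocal.relabelOutputs [DecidableEq A] [DecidableEq B] {p : Fin 2 → Fin 2 → A → B → ℝ}
    (hp : IsLocal p) (α : A → A') (β : B → B') : IsLocal (relabelOutputs α β p) := by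
  obtain ⟨l, hl_nonneg, hl_sum, hlp⟩ := hp
  refine ⟨pushforward₂ (α ∘ ·) (β ∘ ·) l, pushforward₂_nonneg hl_nonneg,
    (sum_sum_pushforward₂ _ _ l).trans hl_sum, fun x y a' b' => ?_⟩
  -- a local behavior is the pushforward of its strategy distribution along evaluation at the inputs
  have hp : p x y = pushforward₂ (· x) (· y) l := funext₂ (hlp x y)
  change pushforward₂ α β (p x y) a' b' =
    pushforward₂ (· x) (· y) (pushforward₂ (α ∘ ·) (β ∘ ·) l) a' b'
  rw [hp, pushforward₂_pushforward₂, pushforward₂_pushforward₂]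
  rfl

theorem relabelOutputs_relabelOutputs_of_leftInverse [DecidableEq A] [DecidableEq B]
    {α : A → A'} {β : B → B'} {α' : A' → A} {β' : B' → B} (hα : LeftInverse α' α)
    (hβ : LeftInverse β' β) (p : Fin 2 → Fin 2 → A → B → ℝ) :
    relabelOutputs α' β' (relabelOutputs α β p) = p := by
  ext x y : 2
  simp only [relabelOutputs, pushforward₂_pushforward₂, hα.comp_eq_id, hβ.comp_eq_id,
    pushforward₂_id]

end Relabel

section Robustness

variable {A B A' B' : Type*} [Fintype A] [Fintype B] [Fintype A'] [Fintype B']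
  [DecidableEq A] [DecidableEq B] [DecidableEq A'] [DecidableEq B']

def robustnessSet (S : (Fin 2 → Fin 2 → A → B → ℝ) → Prop) (P : Fin 2 → Fin 2 → A → B → ℝ) :
    Set ℝ :=
  {r | 0 ≤ r ∧ ∃ Q, S Q ∧ IsLocal (fun x y a b => (1 + r)⁻¹ * (P x y a b + r * Q x y a b))}

theorem robustnessSet_relabelOutputs {α : A → A'} {β : B → B'} {α' : A' → A} {β' : B' → B}
    (hα : LeftInverse α' α) (hβ : LeftInverse β' β) {S : (Fin 2 → Fin 2 → A → B → ℝ) → Prop}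
    {S' : (Fin 2 → Fin 2 → A' → B' → ℝ) → Prop} (hS : ∀ Q, S Q → S' (relabelOutputs α β Q))
    (hS' : ∀ Q', S' Q' → S (relabelOutputs α' β' Q')) (P : Fin 2 → Fin 2 → A → B → ℝ) :
    robustnessSet S' (relabelOutputs α β P) = robustnessSet S P := by
  ext r
  refine ⟨fun ⟨hr, Q', hQ', hmix⟩ => ⟨hr, relabelOutputs α' β' Q', hS' Q' hQ', ?_⟩,
    fun ⟨hr, Q, hQ, hmix⟩ => ⟨hr, relabelOutputs α β Q, hS Q hQ, ?_⟩⟩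
  · have := hmix.relabelOutputs α' β'
    rwa [relabelOutputs_mix, relabelOutputs_relabelOutputs_of_leftInverse hα hβ] at this
  · rw [← relabelOutputs_mix]
    exact hmix.relabelOutputs α β

theorem RS_relabelOutputs {α : A → A'} {β : B → B'} {α' : A' → A} {β' : B' → B}
    (hα : LeftInverse α' α) (hβ : LeftInverse β' β) (P : Fin 2 → Fin 2 → A → B → ℝ) :
    RS (relabelOutputs α β P) = RS P :=
  congrArg sInf <| robustnessSet_relabelOutputs hα hβ (fun _ hQ => hQ.relabelOutputs α β)
    (fun _ hQ => hQ.relabelOutputs α' β') P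

theorem RG_relabelOutputs {α : A → A'} {β : B → B'} {α' : A' → A} {β' : B' → B}
    (hα : LeftInverse α' α) (hβ : LeftInverse β' β) (P : Fin 2 → Fin 2 → A → B → ℝ) :
    RG (relabelOutputs α β P) = RG P := by
  have h := robustnessSet_relabelOutputs hα hβ (S := fun Q => IsBehavior Q ∧ NoSignaling Q)
    (S' := fun Q => IsBehavior Q ∧ NoSignaling Q)
    (fun _ hQ => ⟨hQ.1.relabelOutputs α β, hQ.2.relabelOutputs α β⟩)
    (fun _ hQ => ⟨hQ.1.relabelOutputs α' β', hQ.2.relabelOutputs α' β'⟩) P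
  simp only [robustnessSet, and_assoc] at h
  exact congrArg sInf h

end Robustness

theorem IsBehavior.nonempty_left {A B : Type*} [Fintype A] [Fintype B]
    {p : Fin 2 → Fin 2 → A → B → ℝ} (hp : IsBehavior p) : Nonempty A := by
  by_contra h
  rw [not_nonempty_iff] at h
  simpa using hp.2 0 0

theorem IsBehavior.nonempty_right {A B : Type*} [Fintype A] [Fintype B]
    {p : Fin 2 → Fin 2 → A → B → ℝ} (hp : IsBehavior p) : Nonempty B := by
  by_contra h
  rw [not_nonempty_iff] at h
  simpa using hp.2 0 0

theorem embedK_eq_relabelOutputs (mA mB k : ℕ) (p : Fin 2 → Fin 2 → Fin mA → Fin mB → ℝ) :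
    EmbedK mA mB k p = relabelOutputs (Fin.castAdd k) (Fin.castAdd k) p := by
  ext x y a b
  by_cases h : a.val < mA ∧ b.val < mB
  · rw [EmbedK, dif_pos h]
    exact (pushforward₂_apply_of_injective (Fin.castAdd_injective mA k)
      (Fin.castAdd_injective mB k) (p x y) ⟨a, h.1⟩ ⟨b, h.2⟩).symm
  · rw [EmbedK, dif_neg h, eq_comm]
    simp only [relabelOutputs, pushforward₂]
    refine Finset.sum_eq_zero fun a₀ _ => Finset.sum_eq_zero fun b₀ _ => if_neg ?_
    rintro ⟨rfl, rfl⟩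
    exact h ⟨a₀.isLt, b₀.isLt⟩

/-- `E_k` preserves locality and no-signaling, and leaves the
standard and generalized robustness measures unchanged on no-signaling behaviors. -/
theorem embed_preserves_robustness (mA mB k : ℕ)
    (P : Fin 2 → Fin 2 → Fin mA → Fin mB → ℝ)
    (hP : IsBehavior P) (hNS : NoSignaling P) :
    (IsLocal P → IsLocal (EmbedK mA mB k P)) ∧
    NoSignaling (EmbedK mA mB k P) ∧
    RS (EmbedK mA mB k P) = RS P ∧
    RG (EmbedK mA mB k P) = RG P := by
  have := hP.nonempty_left
  have := hP.nonempty_right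
  have hα := leftInverse_invFun (Fin.castAdd_injective mA k)
  have hβ := leftInverse_invFun (Fin.castAdd_injective mB k)
  rw [embedK_eq_relabelOutputs]
  exact ⟨fun hL => hL.relabelOutputs _ _, hNS.relabelOutputs _ _, RS_relabelOutputs hα hβ P,
    RG_relabelOutputs hα hβ P⟩
end

section
/- For the maximal-violation behavior of a Bell inequality, the standard robustness equals (ν − 1)/2, where ν = max over Bell functionals S of |S·P| / max_{P_l ∈ L} |S·P_l|: that is, if P is a no-signaling behavior with standard robustness r_s (the minimum attained), then ν(P) = 2 r_s + 1. Prove the inequality ν(P) ≤ 2 R_S(P) + 1. -/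
open Finset

/-- Pairing of a Bell functional `S` with a behavior `P`. -/
def dot {A B : Type*} [Fintype A] [Fintype B]
    (S P : Fin 2 → Fin 2 → A → B → ℝ) : ℝ :=
  ∑ x, ∑ y, ∑ a, ∑ b, S x y a b * P x y a b

/-- The local bound `B_S = max_{P_l ∈ L} |S · P_l|` of a Bell functional. -/
noncomputable def localBound {A B : Type*} [Fintype A] [Fintype B]
    [DecidableEq A] [DecidableEq B] (S : Fin 2 → Fin 2 → A → B → ℝ) : ℝ :=
  sSup {w : ℝ | ∃ Pl : Fin 2 → Fin 2 → A → B → ℝ, IsLocal Pl ∧ w = |dot S Pl|}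

theorem dot_smul_add_smul {A B : Type*} [Fintype A] [Fintype B]
    (S P Q : Fin 2 → Fin 2 → A → B → ℝ) (c r : ℝ) :
    dot S (fun x y a b => c * (P x y a b + r * Q x y a b)) = c * (dot S P + r * dot S Q) := by
  simp only [dot, mul_sum, ← sum_add_distrib]
  exact sum_congr rfl fun _ _ => sum_congr rfl fun _ _ =>
    sum_congr rfl fun _ _ => sum_congr rfl fun _ _ => by ring

section

variable {A B : Type*} [Fintype A] [Fintype B] [DecidableEq A] [DecidableEq B]

theorem IsLocal.mem_Icc {p : Fin 2 → Fin 2 → A → B → ℝ} (hp : IsLocal p) (x y : Fin 2) (a : A)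
    (b : B) : p x y a b ∈ Set.Icc 0 1 := by
  obtain ⟨l, hl_nonneg, hl_sum, hpl⟩ := hp
  rw [hpl]
  refine ⟨?_, hl_sum ▸ ?_⟩
  · exact sum_nonneg fun f _ => sum_nonneg fun g _ => by split_ifs <;> simp [hl_nonneg]
  · exact sum_le_sum fun f _ => sum_le_sum fun g _ => by split_ifs <;> simp [hl_nonneg]

theorem abs_dot_le_sum_abs_of_isLocal (S : Fin 2 → Fin 2 → A → B → ℝ)
    {p : Fin 2 → Fin 2 → A → B → ℝ} (hp : IsLocal p) :
    |dot S p| ≤ ∑ x, ∑ y, ∑ a, ∑ b, |S x y a b| := by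
  refine (abs_sum_le_sum_abs _ _).trans (sum_le_sum fun x _ => ?_)
  refine (abs_sum_le_sum_abs _ _).trans (sum_le_sum fun y _ => ?_)
  refine (abs_sum_le_sum_abs _ _).trans (sum_le_sum fun a _ => ?_)
  refine (abs_sum_le_sum_abs _ _).trans (sum_le_sum fun b _ => ?_)
  obtain ⟨h0, h1⟩ := hp.mem_Icc x y a b
  rw [abs_mul, abs_of_nonneg h0]
  exact mul_le_of_le_one_right (abs_nonneg _) h1

theorem abs_dot_le_localBound (S : Fin 2 → Fin 2 → A → B → ℝ)
    {p : Fin 2 → Fin 2 → A → B → ℝ} (hp : IsLocal p) : |dot S p| ≤ localBound S :=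
  le_csSup ⟨_, by rintro w ⟨Pl, hPl, rfl⟩; exact abs_dot_le_sum_abs_of_isLocal S hPl⟩ ⟨p, hp, rfl⟩

theorem abs_dot_le_of_isLocal_mix (S P Q : Fin 2 → Fin 2 → A → B → ℝ) {r : ℝ} (hr : 0 ≤ r)
    (hQ : IsLocal Q) (hM : IsLocal fun x y a b => (1 + r)⁻¹ * (P x y a b + r * Q x y a b)) :
    |dot S P| ≤ (2 * r + 1) * localBound S := by
  have hP : dot S P = (1 + r) * dot S (fun x y a b => (1 + r)⁻¹ * (P x y a b + r * Q x y a b))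
      - r * dot S Q := by
    rw [dot_smul_add_smul]
    field_simp
    ring
  have hM_le := abs_dot_le_localBound S hM
  have hQ_le := abs_dot_le_localBound S hQ
  calc |dot S P|
      ≤ (1 + r) * |dot S (fun x y a b => (1 + r)⁻¹ * (P x y a b + r * Q x y a b))|
          + r * |dot S Q| := by
        rw [hP]
        refine (abs_sub _ _).trans_eq ?_
        rw [abs_mul, abs_mul, abs_of_nonneg (by positivity), abs_of_nonneg hr]
    _ ≤ (1 + r) * localBound S + r * localBound S := by gcongr
    _ = (2 * r + 1) * localBound S := by ring

end

theorem bell_violation_le_standard_robustness_general {A B : Type*} [Fintype A] [Fintype B]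
    [DecidableEq A] [DecidableEq B]
    (P : Fin 2 → Fin 2 → A → B → ℝ)
    (hatt : 0 ≤ RS P ∧ ∃ Q : Fin 2 → Fin 2 → A → B → ℝ, IsLocal Q ∧
      IsLocal (fun x y a b => (1 + RS P)⁻¹ * (P x y a b + RS P * Q x y a b))) :
    (∀ S : Fin 2 → Fin 2 → A → B → ℝ, 0 < localBound S →
      |dot S P| ≤ (2 * RS P + 1) * localBound S) ∧
    sSup {v : ℝ | ∃ S : Fin 2 → Fin 2 → A → B → ℝ, 0 < localBound S ∧
      v = |dot S P| / localBound S} ≤ 2 * RS P + 1 := by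
  obtain ⟨hr, Q, hQ, hM⟩ := hatt
  have hbound (S : Fin 2 → Fin 2 → A → B → ℝ) : |dot S P| ≤ (2 * RS P + 1) * localBound S :=
    abs_dot_le_of_isLocal_mix S P Q hr hQ hM
  refine ⟨fun S _ => hbound S, Real.sSup_le ?_ (by linarith)⟩
  rintro v ⟨S, hS, rfl⟩
  exact (div_le_iff₀ hS).2 (hbound S)

/-- the maximal Bell violation ratio is bounded by `2 R_S(P) + 1`:
`ν(P) = sup_S |S·P| / B_S ≤ 2 R_S(P) + 1` (assuming the minimum defining
`R_S(P)` is attained). -/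
theorem bell_violation_le_standard_robustness {A B : Type*} [Fintype A] [Fintype B]
    [DecidableEq A] [DecidableEq B] [Nonempty A] [Nonempty B]
    (P : Fin 2 → Fin 2 → A → B → ℝ) (hP : IsBehavior P) (hNS : NoSignaling P)
    (hatt : 0 ≤ RS P ∧ ∃ Q : Fin 2 → Fin 2 → A → B → ℝ, IsLocal Q ∧
      IsLocal (fun x y a b => (1 + RS P)⁻¹ * (P x y a b + RS P * Q x y a b))) :
    (∀ S : Fin 2 → Fin 2 → A → B → ℝ, 0 < localBound S →
      |dot S P| ≤ (2 * RS P + 1) * localBound S) ∧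
    sSup {v : ℝ | ∃ S : Fin 2 → Fin 2 → A → B → ℝ, 0 < localBound S ∧
      v = |dot S P| / localBound S} ≤ 2 * RS P + 1 :=
  bell_violation_le_standard_robustness_general P hatt
end
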